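/- In the free noncommutative algebra K⟨x,y,z⟩ with DEGLEX order where x > y > z, the Gröbner basis of the two-sided ideal generated by {x², xy − zx} is {x², xy − zx} ∪ { x zⁱ x : i ≥ 1 }. -/

import Mathlib

/-!
Call a word normal if it contains none of `xx`, `xy`, `xzⁱx` (`i ≥ 1`). Reducing a word
letter by letter from the right with the rules `xx → 0`, `xy → zx`, `xzⁱx → 0` gives a
normal word or `0`; the result never exceeds the original word in DEGLEX, normal words are
fixed, `u·xx·v` goes to `0`, and `u·xy·v`, `u·zx·v` have the same reduction. Extended
linearly, this reduction therefore kills the ideal `I` while preserving the coefficient of a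
normal leading word, so no nonzero element of `I` has a normal leading word. The elements
`xzⁱx` lie in `I` because `xzⁱ⁺¹x = xzⁱx·y - xzⁱ·(xy - zx)`.
-/

open FreeMonoid

/-- Degree-lexicographic order on words in `x, y, z` (with `x = 0 > y = 1 > z = 2`). -/
def deglex3 (u v : FreeMonoid (Fin 3)) : Prop :=
  u.toList.length < v.toList.length ∨
    (u.toList.length = v.toList.length ∧
      List.Lex (fun a b : Fin 3 => b < a) u.toList v.toList)

open scoped MonoidAlgebra

theorem FreeMonoid.toList_of_pow {α : Type*} (a : α) (n : ℕ) :
    (of a ^ n).toList = List.replicate n a := by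
  induction n with
  | zero => rfl
  | succ n ih => rw [pow_succ, toList_mul, ih, toList_of, List.replicate_succ']

namespace MonoidAlgebra

theorem map_mul_mul_eq_zero {R M N : Type*} [CommSemiring R] [Monoid M] [AddCommMonoid N]
    [Module R N] (φ : R[M] →ₗ[R] N) {g : R[M]}
    (hg : ∀ u v, φ (single u 1 * g * single v 1) = 0) (a b : R[M]) :
    φ (a * g * b) = 0 := by
  induction a using MonoidAlgebra.induction_linear with
  | zero => simp
  | add a a' ha ha' => simp [add_mul, ha, ha']
  | single u c =>
    induction b using MonoidAlgebra.induction_linear with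
    | zero => simp
    | add b b' hb hb' => simp [mul_add, hb, hb']
    | single v d =>
      have hsingle : ∀ (m : M) (r : R), single m r = r • single m 1 :=
        fun m r => by rw [MonoidAlgebra.smul_single', mul_one]
      rw [hsingle u, hsingle v, smul_mul_assoc, smul_mul_assoc, mul_smul_comm, map_smul,
        map_smul, hg, smul_zero, smul_zero]

end MonoidAlgebra

namespace Ideal

theorem map_eq_zero_of_mem_span {R N : Type*} [Semiring R] [AddCommMonoid N] (φ : R →+ N)
    {S : Set R} (hS : ∀ s ∈ S, ∀ r, φ (r * s) = 0) {f : R} (hf : f ∈ Ideal.span S) :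
    φ f = 0 := by
  suffices ∀ r, φ (r * f) = 0 by simpa using this 1
  induction hf using Submodule.span_induction with
  | mem s hs => exact hS s hs
  | zero => simp
  | add f f' _ _ hf hf' => simp [mul_add, hf, hf']
  | smul a f _ hf => intro r; rw [smul_eq_mul, ← mul_assoc]; exact hf (r * a)

end Ideal

namespace XYZIdeal

open MonoidAlgebra (single)

local infix:50 " ≺ " => List.Lex (fun a b : Fin 3 => b < a)
local notation "X" => FreeMonoid.of (0 : Fin 3)
local notation "Y" => FreeMonoid.of (1 : Fin 3)
local notation "Z" => FreeMonoid.of (2 : Fin 3)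

theorem lex_trans {u v w : List (Fin 3)} (huv : u ≺ v) (hvw : v ≺ w) : u ≺ w :=
  List.lex_trans (fun hab hbc => lt_trans hbc hab) huv hvw

theorem lex_irrefl (u : List (Fin 3)) : ¬ u ≺ u :=
  List.lex_irrefl (r := fun a b : Fin 3 => b < a) (fun a => lt_irrefl a) u

def startsWithZPowX : List (Fin 3) → Bool
  | 0 :: _ => true
  | 2 :: s => startsWithZPowX s
  | _ => false

theorem exists_eq_replicate_append_of_startsWithZPowX :
    ∀ {s : List (Fin 3)}, startsWithZPowX s → ∃ k r, s = List.replicate k 2 ++ 0 :: r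
  | 0 :: r, _ => ⟨0, r, rfl⟩
  | 2 :: s, h => by
    obtain ⟨k, r, rfl⟩ := exists_eq_replicate_append_of_startsWithZPowX (s := s) h
    exact ⟨k + 1, r, rfl⟩

-- `pushX t` is the reduction of `x·t` for a normal word `t`, with `none` standing for `0`.
def pushX : List (Fin 3) → Option (List (Fin 3))
  | [] => some [0]
  | 1 :: s => (pushX s).map (2 :: ·)
  | 2 :: s => if startsWithZPowX s then none else some (0 :: 2 :: s)
  | _ => none

theorem startsWithZPowX_of_pushX_eq_some :
    ∀ {s m : List (Fin 3)}, pushX s = some m → startsWithZPowX m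
  | [], _, h => by cases h; rfl
  | 1 :: s, m, h => by
    simp only [pushX, Option.map_eq_some_iff] at h
    obtain ⟨m', hm', rfl⟩ := h
    exact startsWithZPowX_of_pushX_eq_some (m := m') hm'
  | 2 :: s, _, h => by
    simp only [pushX] at h
    split at h <;> cases h
    rfl

theorem pushX_eq_none_of_startsWithZPowX :
    ∀ {m : List (Fin 3)}, startsWithZPowX m → pushX m = none
  | 0 :: _, _ => rfl
  | 2 :: _, h => if_pos h

theorem pushX_pushX {s m : List (Fin 3)} (h : pushX s = some m) : pushX m = none :=
  pushX_eq_none_of_startsWithZPowX (startsWithZPowX_of_pushX_eq_some h)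

theorem length_of_pushX_eq_some :
    ∀ {s m : List (Fin 3)}, pushX s = some m → m.length = s.length + 1
  | [], _, h => by cases h; rfl
  | 1 :: s, m, h => by
    simp only [pushX, Option.map_eq_some_iff] at h
    obtain ⟨m', hm', rfl⟩ := h
    simp [length_of_pushX_eq_some hm']
  | 2 :: s, _, h => by
    simp only [pushX] at h
    split at h <;> cases h
    rfl

theorem pushX_le {s m : List (Fin 3)} (h : pushX s = some m) : m = 0 :: s ∨ m ≺ 0 :: s := by
  match s, h with
  | [], h => cases h; exact .inl rfl
  | 1 :: s, h =>
    simp only [pushX, Option.map_eq_some_iff] at h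
    obtain ⟨m', -, rfl⟩ := h
    exact .inr (.rel (by decide))
  | 2 :: s, h =>
    simp only [pushX] at h
    split at h <;> cases h
    exact .inl rfl

def normalForm : List (Fin 3) → Option (List (Fin 3))
  | [] => some []
  | a :: s => (normalForm s).bind fun t => if a = 0 then pushX t else some (a :: t)

theorem length_of_normalForm_eq_some :
    ∀ {w v : List (Fin 3)}, normalForm w = some v → v.length = w.length
  | [], _, h => by cases h; rfl
  | a :: s, v, h => by
    simp only [normalForm, Option.bind_eq_some_iff] at h
    obtain ⟨t, ht, h⟩ := h
    have hlen := length_of_normalForm_eq_some ht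
    split at h
    · simp [length_of_pushX_eq_some h, hlen]
    · cases h; simp [hlen]

theorem normalForm_le :
    ∀ {w v : List (Fin 3)}, normalForm w = some v → v = w ∨ v ≺ w
  | [], _, h => by cases h; exact .inl rfl
  | a :: s, v, h => by
    simp only [normalForm, Option.bind_eq_some_iff] at h
    obtain ⟨t, ht, h⟩ := h
    have hts := normalForm_le ht
    split at h
    · subst a
      rcases hts with rfl | hts
      · exact pushX_le h
      · rcases pushX_le h with rfl | h
        · exact .inr (.cons hts)
        · exact .inr (lex_trans h (.cons hts))
    · cases h
      rcases hts with rfl | hts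
      · exact .inl rfl
      · exact .inr (.cons hts)

theorem normalForm_ne_of_deglex3 {w L : FreeMonoid (Fin 3)} (h : deglex3 w L) :
    normalForm w.toList ≠ some L.toList := by
  intro hwL
  have hlen := length_of_normalForm_eq_some hwL
  rcases h with h | ⟨-, h⟩
  · omega
  · rcases normalForm_le hwL with hLw | hLw
    · exact lex_irrefl _ (hLw ▸ h)
    · exact lex_irrefl _ (lex_trans h hLw)

theorem normalForm_append_xx : ∀ u v : List (Fin 3), normalForm (u ++ 0 :: 0 :: v) = none
  | [], v => by
    cases hv : normalForm v with
    | none => simp [normalForm, hv]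
    | some t =>
      cases ht : pushX t with
      | none => simp [normalForm, hv, ht]
      | some m => simp [normalForm, hv, ht, pushX_pushX ht]
  | a :: u, v => by simp [normalForm, normalForm_append_xx u v]

theorem normalForm_append_xy : ∀ u v : List (Fin 3),
    normalForm (u ++ 0 :: 1 :: v) = normalForm (u ++ 2 :: 0 :: v)
  | [], v => by
    cases hv : normalForm v with
    | none => simp [normalForm, hv]
    | some t => simp [normalForm, hv, pushX, Option.map_eq_bind]
  | a :: u, v => by simp [normalForm, normalForm_append_xy u v]

def IsNormal (w : List (Fin 3)) : Prop :=
  ¬ [0, 0] <:+: w ∧ ¬ [0, 1] <:+: w ∧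
    ∀ i, 1 ≤ i → ¬ 0 :: List.replicate i 2 ++ [0] <:+: w

theorem IsNormal.of_cons {a : Fin 3} {s : List (Fin 3)} (h : IsNormal (a :: s)) : IsNormal s :=
  have hs : s <:+: a :: s := (List.suffix_cons a s).isInfix
  ⟨fun h' => h.1 (h'.trans hs), fun h' => h.2.1 (h'.trans hs),
    fun i hi h' => h.2.2 i hi (h'.trans hs)⟩

theorem normalForm_of_isNormal : ∀ {w : List (Fin 3)}, IsNormal w → normalForm w = some w
  | [], _ => rfl
  | a :: s, hw => by
    simp only [normalForm, normalForm_of_isNormal hw.of_cons, Option.bind_some]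
    split
    · subst a
      match s, hw with
      | [], _ => rfl
      | 0 :: s, hw => exact absurd ⟨[], s, rfl⟩ hw.1
      | 1 :: s, hw => exact absurd ⟨[], s, rfl⟩ hw.2.1
      | 2 :: s, hw =>
        refine if_neg fun hzx => ?_
        obtain ⟨k, r, rfl⟩ := exists_eq_replicate_append_of_startsWithZPowX hzx
        exact hw.2.2 (k + 1) (by omega) ⟨[], r, by simp [List.replicate_succ]⟩
    · rfl

variable {K : Type*} [CommRing K]

variable (K) in
noncomputable def reduceWord (w : FreeMonoid (Fin 3)) : K[FreeMonoid (Fin 3)] :=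
  (normalForm w.toList).elim 0 fun v => single (ofList v) 1

noncomputable def reduce : K[FreeMonoid (Fin 3)] →ₗ[K] K[FreeMonoid (Fin 3)] :=
  (MonoidAlgebra.basis (FreeMonoid (Fin 3)) K).constr K (reduceWord K)

theorem reduce_single_one (w : FreeMonoid (Fin 3)) :
    reduce (single w (1 : K)) = reduceWord K w :=
  (MonoidAlgebra.basis (FreeMonoid (Fin 3)) K).constr_basis K _ w

theorem reduce_mul_xx_mul (u v : FreeMonoid (Fin 3)) :
    reduce (single u (1 : K) * single (X * X) 1 * single v 1) = 0 := by
  simp [reduce_single_one, reduceWord, normalForm_append_xx]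

theorem reduce_mul_xy_sub_zx_mul (u v : FreeMonoid (Fin 3)) :
    reduce (single u (1 : K) * (single (X * Y) 1 - single (Z * X) 1) * single v 1) = 0 := by
  simp [mul_sub, sub_mul, reduce_single_one, reduceWord, normalForm_append_xy]

theorem reduce_eq_zero_of_mem_span {f : K[FreeMonoid (Fin 3)]}
    (hf : f ∈ Ideal.span {q | ∃ a b : K[FreeMonoid (Fin 3)],
      q = a * single (X * X) 1 * b ∨ q = a * (single (X * Y) 1 - single (Z * X) 1) * b}) :
    reduce f = 0 := by
  refine Ideal.map_eq_zero_of_mem_span reduce.toAddMonoidHom ?_ hf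
  rintro _ ⟨a, b, rfl | rfl⟩ r <;> rw [← mul_assoc, ← mul_assoc]
  · exact MonoidAlgebra.map_mul_mul_eq_zero reduce reduce_mul_xx_mul _ _
  · exact MonoidAlgebra.map_mul_mul_eq_zero reduce reduce_mul_xy_sub_zx_mul _ _

def IsLeadingWord (f : K[FreeMonoid (Fin 3)]) (L : FreeMonoid (Fin 3)) : Prop :=
  L ∈ f.coeff.support ∧ ∀ w ∈ f.coeff.support, w ≠ L → deglex3 w L

theorem IsLeadingWord.eq_of_single {w L : FreeMonoid (Fin 3)} {c : K}
    (h : IsLeadingWord (single w c) L) : L = w :=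
  Finset.mem_singleton.mp (Finsupp.support_single_subset h.1)

theorem xy_ne_zx : X * Y ≠ Z * X := fun h => absurd (congrArg toList h) (by decide)

theorem xy_sub_zx_ne_zero [Nontrivial K] : single (X * Y) 1 - single (Z * X) (1 : K) ≠ 0 :=
  sub_ne_zero.mpr fun h => xy_ne_zx (MonoidAlgebra.single_left_injective one_ne_zero h)

theorem not_deglex3_xy_zx : ¬ deglex3 (X * Y) (Z * X) := by
  unfold deglex3; decide

theorem IsLeadingWord.eq_xy [Nontrivial K] {L : FreeMonoid (Fin 3)}
    (h : IsLeadingWord (single (X * Y) 1 - single (Z * X) (1 : K)) L) :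
    L = X * Y := by
  classical
  rcases Finset.mem_union.mp (Finsupp.support_sub h.1) with hL | hL
  · exact Finset.mem_singleton.mp (Finsupp.support_single_subset hL)
  · have hL : L = Z * X := Finset.mem_singleton.mp (Finsupp.support_single_subset hL)
    have hxy := h.2 (X * Y) (by simp [MonoidAlgebra.coeff_sub, xy_ne_zx]) (hL ▸ xy_ne_zx)
    exact absurd (hL ▸ hxy) not_deglex3_xy_zx

theorem coeff_reduceWord_of_deglex3 {w L : FreeMonoid (Fin 3)} (h : deglex3 w L) :
    (reduceWord K w).coeff L = 0 := by
  cases hw : normalForm w.toList with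
  | none => simp [reduceWord, hw]
  | some v =>
    have hvL : ofList v ≠ L := by
      rintro rfl
      exact normalForm_ne_of_deglex3 h hw
    simp [reduceWord, hw, hvL]

theorem coeff_reduce_of_isLeadingWord {f : K[FreeMonoid (Fin 3)]} {L : FreeMonoid (Fin 3)}
    (hf : IsLeadingWord f L) (hL : normalForm L.toList = some L.toList) :
    (reduce f).coeff L = f.coeff L := by
  rw [reduce, Module.Basis.constr_apply, MonoidAlgebra.coeff_finsuppSum, Finsupp.sum_apply]
  refine (Finset.sum_eq_single L (fun w hw hwL => ?_) (fun hL => ?_)).trans ?_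
  · simp [coeff_reduceWord_of_deglex3 (hf.2 w hw hwL)]
  · simp [Finsupp.notMem_support_iff.mp hL]
  · simp [reduceWord, hL]
    rfl

theorem single_xzx_mul_mem {J : Ideal K[FreeMonoid (Fin 3)]}
    (h1 : ∀ a b, a * single (X * X) 1 * b ∈ J)
    (h2 : ∀ a b, a * (single (X * Y) 1 - single (Z * X) 1) * b ∈ J)
    (i : ℕ) (r : K[FreeMonoid (Fin 3)]) : single (X * Z ^ i * X) 1 * r ∈ J := by
  induction i generalizing r with
  | zero => simpa using h1 1 r
  | succ n ih =>
    have hstep : single (X * Z ^ (n + 1) * X) (1 : K) =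
        single (X * Z ^ n * X) 1 * single Y 1 -
          single (X * Z ^ n) 1 * (single (X * Y) 1 - single (Z * X) 1) := by
      simp [mul_sub, mul_assoc, pow_succ]
    rw [hstep, sub_mul, mul_assoc]
    exact sub_mem (ih _) (h2 _ r)

end XYZIdeal

/-- In `K⟨x,y,z⟩` with DEGLEX (`x > y > z`), the set
`{x², xy - zx} ∪ {xzⁱx : i ≥ 1}` is a Gröbner basis of the two-sided ideal
generated by `{x², xy - zx}`. -/
theorem stmt_16 {K : Type*} [Field K]
    (lm : MonoidAlgebra K (FreeMonoid (Fin 3)) → FreeMonoid (Fin 3))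
    (hlm : ∀ f : MonoidAlgebra K (FreeMonoid (Fin 3)), f ≠ 0 →
      lm f ∈ f.coeff.support ∧ ∀ w ∈ f.coeff.support, w ≠ lm f → deglex3 w (lm f)) :
    let x : FreeMonoid (Fin 3) := FreeMonoid.of 0
    let y : FreeMonoid (Fin 3) := FreeMonoid.of 1
    let z : FreeMonoid (Fin 3) := FreeMonoid.of 2
    let g1 : MonoidAlgebra K (FreeMonoid (Fin 3)) := MonoidAlgebra.single (x * x) 1
    let g2 : MonoidAlgebra K (FreeMonoid (Fin 3)) :=
      MonoidAlgebra.single (x * y) 1 - MonoidAlgebra.single (z * x) 1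
    let I : Ideal (MonoidAlgebra K (FreeMonoid (Fin 3))) :=
      Ideal.span {q | ∃ a b : MonoidAlgebra K (FreeMonoid (Fin 3)),
        q = a * g1 * b ∨ q = a * g2 * b}
    let G : Set (MonoidAlgebra K (FreeMonoid (Fin 3))) :=
      insert g1 (insert g2 {p | ∃ i : ℕ, 1 ≤ i ∧
        p = MonoidAlgebra.single (x * z ^ i * x) (1 : K)})
    (∀ g ∈ G, g ∈ I) ∧
      ∀ f ∈ I, f ≠ 0 → ∃ g ∈ G, g ≠ 0 ∧ (lm g).toList <:+: (lm f).toList := by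
  intro x y z g1 g2 I G
  have hg1 : ∀ a b, a * g1 * b ∈ I := fun a b => Ideal.subset_span ⟨a, b, .inl rfl⟩
  have hg2 : ∀ a b, a * g2 * b ∈ I := fun a b => Ideal.subset_span ⟨a, b, .inr rfl⟩
  have hlead : ∀ f, f ≠ 0 → XYZIdeal.IsLeadingWord f (lm f) := hlm
  refine ⟨?_, fun f hf hf0 => ?_⟩
  · rintro g (rfl | rfl | ⟨i, -, rfl⟩)
    · simpa using hg1 1 1
    · simpa using hg2 1 1
    · simpa using XYZIdeal.single_xzx_mul_mem hg1 hg2 i 1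
  by_contra! hG
  have hsingle_ne : ∀ w : FreeMonoid (Fin 3), MonoidAlgebra.single w (1 : K) ≠ 0 :=
    fun w => MonoidAlgebra.single_ne_zero.mpr one_ne_zero
  have hnormal : XYZIdeal.IsNormal (lm f).toList := by
    refine ⟨?_, ?_, fun i hi => ?_⟩
    · simpa [x, (hlead g1 (hsingle_ne _)).eq_of_single] using
        hG g1 (Set.mem_insert _ _) (hsingle_ne _)
    · simpa [x, y, (hlead g2 XYZIdeal.xy_sub_zx_ne_zero).eq_xy] using
        hG g2 (Set.mem_insert_of_mem _ (Set.mem_insert _ _)) XYZIdeal.xy_sub_zx_ne_zero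
    · simpa [x, z, (hlead _ (hsingle_ne _)).eq_of_single, toList_of_pow] using
        hG _ (Set.mem_insert_of_mem _ (Set.mem_insert_of_mem _ ⟨i, hi, rfl⟩)) (hsingle_ne _)
  have hcoeff := XYZIdeal.coeff_reduce_of_isLeadingWord (hlead f hf0)
    (XYZIdeal.normalForm_of_isNormal hnormal)
  rw [XYZIdeal.reduce_eq_zero_of_mem_span hf] at hcoeff
  exact Finsupp.mem_support_iff.mp (hlead f hf0).1 (by simpa using hcoeff.symm)
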